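/- Let r ≥ 1, 1 ≤ p ≤ ∞, and suppose ξ_k = ⟨f − f^δ, φ_k⟩ satisfies ‖ξ‖_{ℓ_p} ≤ δ with 0 < δ < 1. Then there is a constant c such that for all N ≥ r, ‖D_N^{(r)} f − D_N^{(r)} f^δ‖_{L²[-1,1]} ≤ c · δ · N^{2r − 1/p + 1/2}. -/

import Mathlib

open MeasureTheory Set ENNReal

/-- Orthonormal Legendre polynomial `φ_k(t) = √(k+1/2)·(2^k k!)⁻¹·dᵏ/dtᵏ[(t²-1)^k]`. -/
noncomputable def phi (k : ℕ) : ℝ → ℝ := fun t =>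
  Real.sqrt ((k : ℝ) + 1/2) * ((2:ℝ)^k * (Nat.factorial k : ℝ))⁻¹ *
    iteratedDeriv k (fun s => (s^2 - 1)^k) t

/-- Fourier–Legendre coefficient `⟨f, φ_k⟩`. -/
noncomputable def coef (f : ℝ → ℝ) (k : ℕ) : ℝ := ∫ t in (-1:ℝ)..1, f t * phi k t

/-- Summand of the weighted Wiener norm. -/
noncomputable def wSeq (s μ : ℝ) (f : ℝ → ℝ) (k : ℕ) : ℝ :=
  (max 1 (k:ℝ)) ^ (s * μ) * |coef f k| ^ s

/-- Weighted Wiener norm `‖f‖_{s,μ}`. -/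
noncomputable def wNorm (s μ : ℝ) (f : ℝ → ℝ) : ℝ := (∑' k, wSeq s μ f k) ^ (1/s)

/-- Truncation method `D_N^{(r)}` applied to a coefficient sequence `a`. -/
noncomputable def DN (a : ℕ → ℝ) (r N : ℕ) (t : ℝ) : ℝ :=
  ∑ k ∈ Finset.Icc r N, a k * iteratedDeriv r (phi k) t

/-- Lebesgue measure restricted to `[-1,1]`. -/
noncomputable def restr : Measure ℝ := volume.restrict (Set.Icc (-1) 1)

/-!
`D_N^{(r)} f - D_N^{(r)} f^δ = ∑_{k=r}^N ξ_k φ_k^{(r)}`, so by the triangle inequality and Hölder's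
inequality on the `N - r + 1 ≤ N` indices its `L²` norm is at most
`N^{1-1/p} δ · max_{r ≤ k ≤ N} ‖φ_k^{(r)}‖₂`.

By Rodrigues' formula `φ_k^{(r)}` is a multiple of `D^{k+r} U` with `U = (X² - 1)^k`.
Integrating by parts `k + r` times turns `‖D^{k+r} U‖₂²` into boundary terms
`D^{k+r+i} U(±1) D^{k+r-1-i} U(±1)`, which vanish for `i ≥ r` since `±1` are roots of order `k`
of `U`. The remaining values are read off Leibniz' rule and give
`‖φ_k^{(r)}‖₂² ≤ (2k+1) r (2k)^{4r-2} ≤ 3r 16^r k^{4r-1}`.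
-/

open Polynomial

section PolynomialCalculus

lemma iteratedDeriv_eval (p : ℝ[X]) (n : ℕ) :
    iteratedDeriv n (fun t => p.eval t) = fun t => (derivative^[n] p).eval t := by
  induction n with
  | zero => simp
  | succ n ih =>
    rw [iteratedDeriv_succ, ih, Function.iterate_succ_apply']
    exact funext fun t => Polynomial.deriv _

variable {a b : ℝ}

lemma integral_eval_mul_eval_derivative (A B : ℝ[X]) :
    ∫ t in a..b, A.eval t * (derivative B).eval t
      = A.eval b * B.eval b - A.eval a * B.eval a
        - ∫ t in a..b, (derivative A).eval t * B.eval t :=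
  intervalIntegral.integral_mul_deriv_eq_deriv_mul (fun x _ => A.hasDerivAt x)
    (fun x _ => B.hasDerivAt x) (A.derivative.continuous.intervalIntegrable _ _)
    (B.derivative.continuous.intervalIntegrable _ _)

lemma integral_eval_mul_eval_iterate_derivative (j : ℕ) (A B : ℝ[X]) :
    ∫ t in a..b, A.eval t * (derivative^[j] B).eval t
      = ∑ i ∈ Finset.range j, (-1) ^ i *
          ((derivative^[i] A).eval b * (derivative^[j - 1 - i] B).eval b
            - (derivative^[i] A).eval a * (derivative^[j - 1 - i] B).eval a)
        + (-1) ^ j * ∫ t in a..b, (derivative^[j] A).eval t * B.eval t := by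
  induction j generalizing A with
  | zero => simp
  | succ j ih =>
    rw [Function.iterate_succ_apply', integral_eval_mul_eval_derivative, ih (derivative A),
      Finset.sum_range_succ']
    have hindex : ∀ x : ℕ, j - 1 - x = j + 1 - 1 - (x + 1) := fun x => by omega
    simp only [Function.iterate_succ_apply, hindex, Nat.add_sub_cancel, Nat.sub_zero,
      Function.iterate_zero_apply, pow_succ, pow_zero, one_mul, mul_one, mul_neg, neg_mul,
      Finset.sum_neg_distrib]
    ring

lemma integral_sq_eval_iterate_derivative {P : ℝ[X]} {m : ℕ} (hP : P.natDegree < 2 * m) :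
    ∫ t in a..b, ((derivative^[m] P).eval t) ^ 2
      = ∑ i ∈ Finset.range m, (-1) ^ i *
          ((derivative^[m + i] P).eval b * (derivative^[m - 1 - i] P).eval b
            - (derivative^[m + i] P).eval a * (derivative^[m - 1 - i] P).eval a) := by
  have hvanish : derivative^[m] (derivative^[m] P) = 0 := by
    rw [← Function.iterate_add_apply]
    exact iterate_derivative_eq_zero (by omega)
  have h := integral_eval_mul_eval_iterate_derivative (a := a) (b := b) m (derivative^[m] P) P
  simp only [hvanish, eval_zero, zero_mul, intervalIntegral.integral_zero, mul_zero, add_zero,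
    ← Function.iterate_add_apply, add_comm _ m] at h
  simp only [sq, h]

end PolynomialCalculus

lemma eval_iterate_derivative_X_sub_C_pow_mul {R : Type*} [CommRing R] (c : R) (k a : ℕ)
    (Q : R[X]) :
    (derivative^[a] ((X - C c) ^ k * Q)).eval c
      = a.choose k * k.factorial * (derivative^[a - k] Q).eval c := by
  rw [mul_comm, iterate_derivative_mul, eval_finsetSum]
  rcases lt_or_ge a k with hak | hka
  · rw [Nat.choose_eq_zero_of_lt hak, Nat.cast_zero, zero_mul, zero_mul]
    refine Finset.sum_eq_zero fun i hi => ?_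
    have hik : i < k := by rw [Finset.mem_range] at hi; omega
    simp [iterate_derivative_X_sub_pow, zero_pow (Nat.sub_ne_zero_of_lt hik)]
  · rw [Finset.sum_eq_single_of_mem k (Finset.mem_range.2 (by omega))]
    · simp only [iterate_derivative_X_sub_pow_self, nsmul_eq_mul, eval_mul, eval_natCast]
      ring
    · intro i _ hik
      rcases lt_or_gt_of_ne hik with h | h
      · simp [iterate_derivative_X_sub_pow, zero_pow (Nat.sub_ne_zero_of_lt h)]
      · simp [iterate_derivative_X_sub_pow, Nat.descFactorial_eq_zero_iff_lt.2 h]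

noncomputable def rodriguesPoly (k : ℕ) : ℝ[X] := (X ^ 2 - 1) ^ k

section RodriguesPoly

variable {k a : ℕ} {x : ℝ}

lemma rodriguesPoly_eq (k : ℕ) : rodriguesPoly k = (X - C 1) ^ k * (X - C (-1)) ^ k := by
  rw [rodriguesPoly, ← mul_pow]
  congr 1
  simp only [map_neg, map_one, sub_neg_eq_add]
  ring

lemma natDegree_rodriguesPoly_le (k : ℕ) : (rodriguesPoly k).natDegree ≤ 2 * k := by
  refine natDegree_pow_le.trans ?_
  rw [← C_1, natDegree_X_pow_sub_C, mul_comm]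

lemma abs_eval_iterate_derivative_rodriguesPoly (hx : x = 1 ∨ x = -1) (k a : ℕ) :
    |(derivative^[a] (rodriguesPoly k)).eval x|
      = a.choose k * k.factorial * k.descFactorial (a - k) * 2 ^ (k - (a - k)) := by
  rcases hx with rfl | rfl
  · rw [rodriguesPoly_eq, eval_iterate_derivative_X_sub_C_pow_mul, iterate_derivative_X_sub_pow]
    simp only [nsmul_eq_mul, eval_mul, eval_natCast, eval_pow, eval_sub, eval_X, eval_C, abs_mul,
      Nat.abs_cast, abs_pow]
    norm_num [mul_assoc]
  · rw [rodriguesPoly_eq, mul_comm, eval_iterate_derivative_X_sub_C_pow_mul,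
      iterate_derivative_X_sub_pow]
    simp only [nsmul_eq_mul, eval_mul, eval_natCast, eval_pow, eval_sub, eval_X, eval_C, abs_mul,
      Nat.abs_cast, abs_pow]
    norm_num [mul_assoc]

lemma eval_iterate_derivative_rodriguesPoly_of_lt (hx : x = 1 ∨ x = -1) (hak : a < k) :
    (derivative^[a] (rodriguesPoly k)).eval x = 0 := by
  rw [← abs_eq_zero, abs_eval_iterate_derivative_rodriguesPoly hx, Nat.choose_eq_zero_of_lt hak]
  simp

lemma abs_eval_iterate_derivative_rodriguesPoly_le (hx : x = 1 ∨ x = -1) (hka : k ≤ a) :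
    |(derivative^[a] (rodriguesPoly k)).eval x|
      ≤ k.factorial * 2 ^ k * (2 * k : ℝ) ^ (2 * (a - k)) := by
  rw [abs_eval_iterate_derivative_rodriguesPoly hx]
  rcases le_or_gt a (2 * k) with ha | ha
  · have hchoose : a.choose k ≤ (2 * k) ^ (a - k) := by
      rw [← Nat.choose_symm hka]
      exact (Nat.choose_le_pow a (a - k)).trans (Nat.pow_le_pow_left ha _)
    have hdesc : k.descFactorial (a - k) ≤ (2 * k) ^ (a - k) :=
      (Nat.descFactorial_le_pow k (a - k)).trans (Nat.pow_le_pow_left (by omega) _)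
    have htwo : 2 ^ (k - (a - k)) ≤ 2 ^ k := Nat.pow_le_pow_right (by norm_num) (by omega)
    have key : a.choose k * k.factorial * k.descFactorial (a - k) * 2 ^ (k - (a - k))
        ≤ k.factorial * 2 ^ k * (2 * k) ^ (2 * (a - k)) := by
      calc _ ≤ (2 * k) ^ (a - k) * k.factorial * (2 * k) ^ (a - k) * 2 ^ k := by gcongr
        _ = _ := by ring
    exact_mod_cast key
  · rw [Nat.descFactorial_eq_zero_iff_lt.2 (by omega)]
    simp only [Nat.cast_zero, mul_zero, zero_mul]
    positivity

lemma abs_eval_mul_eval_iterate_derivative_rodriguesPoly_le (hx : x = 1 ∨ x = -1) {r i : ℕ}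
    (hi : i < r) :
    |(derivative^[k + r + i] (rodriguesPoly k)).eval x
        * (derivative^[k + r - 1 - i] (rodriguesPoly k)).eval x|
      ≤ (k.factorial * 2 ^ k) ^ 2 * (2 * k : ℝ) ^ (4 * r - 2) := by
  rw [abs_mul]
  calc _ ≤ (k.factorial * 2 ^ k * (2 * k : ℝ) ^ (2 * (k + r + i - k)))
        * (k.factorial * 2 ^ k * (2 * k : ℝ) ^ (2 * (k + r - 1 - i - k))) := by
        gcongr
        · exact abs_eval_iterate_derivative_rodriguesPoly_le hx (by omega)
        · exact abs_eval_iterate_derivative_rodriguesPoly_le hx (by omega)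
    _ = _ := by
        rw [show 4 * r - 2 = 2 * (k + r + i - k) + 2 * (k + r - 1 - i - k) by omega, pow_add]
        ring

lemma integral_sq_eval_iterate_derivative_rodriguesPoly_le {r : ℕ} (hr : 1 ≤ r) (k : ℕ) :
    ∫ t in (-1 : ℝ)..1, ((derivative^[k + r] (rodriguesPoly k)).eval t) ^ 2
      ≤ 2 * r * ((k.factorial * 2 ^ k) ^ 2 * (2 * k : ℝ) ^ (4 * r - 2)) := by
  have hdeg := natDegree_rodriguesPoly_le k
  rw [integral_sq_eval_iterate_derivative (by omega),
    ← Finset.sum_subset (Finset.range_subset_range.2 (by omega : r ≤ k + r))]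
  · calc _ ≤ ∑ _i ∈ Finset.range r,
          2 * ((k.factorial * 2 ^ k) ^ 2 * (2 * k : ℝ) ^ (4 * r - 2)) := by
          refine Finset.sum_le_sum fun i hi => ?_
          have hi : i < r := Finset.mem_range.1 hi
          have h1 := abs_eval_mul_eval_iterate_derivative_rodriguesPoly_le (k := k) (Or.inl rfl) hi
          have h2 := abs_eval_mul_eval_iterate_derivative_rodriguesPoly_le (k := k) (Or.inr rfl) hi
          calc _ ≤ |(-1 : ℝ) ^ i * _| := le_abs_self _
            _ ≤ _ := by
              rw [abs_mul, abs_pow, abs_neg, abs_one, one_pow, one_mul, two_mul]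
              exact (abs_sub _ _).trans (add_le_add h1 h2)
      _ = _ := by rw [Finset.sum_const, Finset.card_range, nsmul_eq_mul]; ring
  · intro i hi hir
    have hlt : k + r - 1 - i < k := by rw [Finset.mem_range] at hi hir; omega
    simp [eval_iterate_derivative_rodriguesPoly_of_lt (Or.inl rfl) hlt,
      eval_iterate_derivative_rodriguesPoly_of_lt (Or.inr rfl) hlt]

end RodriguesPoly

lemma iteratedDeriv_phi (k r : ℕ) :
    iteratedDeriv r (phi k) = fun t => √((k : ℝ) + 1 / 2) * ((2 : ℝ) ^ k * k.factorial)⁻¹ *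
      (derivative^[k + r] (rodriguesPoly k)).eval t := by
  have hphi : phi k = fun t =>
      (C (√((k : ℝ) + 1 / 2) * ((2 : ℝ) ^ k * k.factorial)⁻¹) *
        derivative^[k] (rodriguesPoly k)).eval t := by
    have hU : (fun s : ℝ => (s ^ 2 - 1) ^ k) = fun s => (rodriguesPoly k).eval s := by
      simp [rodriguesPoly]
    funext t
    rw [phi, hU, iteratedDeriv_eval, eval_C_mul]
  rw [hphi, iteratedDeriv_eval, iterate_derivative_C_mul, ← Function.iterate_add_apply,
    add_comm r k]
  simp only [eval_C_mul]

lemma continuous_iteratedDeriv_phi (k r : ℕ) : Continuous (iteratedDeriv r (phi k)) := by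
  rw [iteratedDeriv_phi]
  fun_prop

lemma integral_sq_iteratedDeriv_phi_le {r : ℕ} (hr : 1 ≤ r) (k : ℕ) :
    ∫ t in (-1 : ℝ)..1, iteratedDeriv r (phi k) t ^ 2
      ≤ (2 * k + 1) * r * (2 * k : ℝ) ^ (4 * r - 2) := by
  have hnorm : (√((k : ℝ) + 1 / 2) * ((2 : ℝ) ^ k * k.factorial)⁻¹) ^ 2
      * (2 * r * ((k.factorial * 2 ^ k) ^ 2 * (2 * k : ℝ) ^ (4 * r - 2)))
      = (2 * k + 1) * r * (2 * k : ℝ) ^ (4 * r - 2) := by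
    rw [mul_pow, Real.sq_sqrt (by positivity)]
    field_simp
  rw [iteratedDeriv_phi]
  simp only [mul_pow _ (eval _ _), intervalIntegral.integral_const_mul]
  rw [← hnorm]
  exact mul_le_mul_of_nonneg_left (integral_sq_eval_iterate_derivative_rodriguesPoly_le hr k)
    (sq_nonneg _)

lemma eLpNorm_restr_two_eq {g : ℝ → ℝ} (hg : Continuous g) :
    eLpNorm g 2 restr = ENNReal.ofReal √(∫ t in (-1 : ℝ)..1, g t ^ 2) := by
  have hg2 : MemLp g 2 restr :=
    (memLp_two_iff_integrable_sq hg.aestronglyMeasurable).2 (hg.pow 2).integrableOn_Icc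
  rw [hg2.eLpNorm_eq_integral_rpow_norm two_ne_zero ofNat_ne_top, Real.sqrt_eq_rpow,
    intervalIntegral.integral_of_le (by norm_num), ← integral_Icc_eq_integral_Ioc]
  norm_num [restr, Real.norm_eq_abs, sq_abs]

lemma eLpNorm_iteratedDeriv_phi_le {r k : ℕ} (hr : 1 ≤ r) (hk : 1 ≤ k) :
    eLpNorm (iteratedDeriv r (phi k)) 2 restr
      ≤ ENNReal.ofReal (√(3 * r * (16 : ℝ) ^ r) * (k : ℝ) ^ (2 * (r : ℝ) - 1 / 2)) := by
  rw [eLpNorm_restr_two_eq (continuous_iteratedDeriv_phi k r)]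
  refine ENNReal.ofReal_le_ofReal (Real.sqrt_le_iff.2 ⟨by positivity, ?_⟩)
  have hk' : (1 : ℝ) ≤ k := by exact_mod_cast hk
  have hsq : (√(3 * r * (16 : ℝ) ^ r) * (k : ℝ) ^ (2 * (r : ℝ) - 1 / 2)) ^ 2
      = 3 * r * 16 ^ r * (k : ℝ) ^ (4 * r - 1) := by
    rw [mul_pow, Real.sq_sqrt (by positivity), ← Real.rpow_mul_natCast (by positivity),
      ← Real.rpow_natCast _ (4 * r - 1)]
    push_cast [Nat.cast_sub (by omega : 1 ≤ 4 * r)]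
    ring_nf
  rw [hsq]
  refine (integral_sq_iteratedDeriv_phi_le hr k).trans ?_
  have h16 : (2 : ℝ) ^ (4 * r - 2) ≤ 16 ^ r := by
    rw [show (16 : ℝ) = 2 ^ 4 by norm_num, ← pow_mul]
    exact pow_le_pow_right₀ (by norm_num) (by omega)
  calc (2 * k + 1) * r * (2 * k : ℝ) ^ (4 * r - 2)
      ≤ 3 * k * r * (16 ^ r * (k : ℝ) ^ (4 * r - 2)) := by
        rw [mul_pow]
        gcongr
        linarith
    _ = 3 * r * 16 ^ r * (k : ℝ) ^ (4 * r - 1) := by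
        rw [show 4 * r - 1 = 4 * r - 2 + 1 by omega, pow_succ]
        ring

section FiniteSums

variable {α E : Type*} [MeasurableSpace α] [NormedAddCommGroup E] {p : ℝ≥0∞}

lemma eLpNorm_sum_smul_le [NormedSpace ℝ E] {ι : Type*} {μ : Measure α} (hp : 1 ≤ p)
    (s : Finset ι) (a : ι → ℝ) {g : ι → α → E} (hg : ∀ i ∈ s, AEStronglyMeasurable (g i) μ)
    {M : ℝ≥0∞} (hM : ∀ i ∈ s, eLpNorm (g i) p μ ≤ M) :
    eLpNorm (fun x => ∑ i ∈ s, a i • g i x) p μ ≤ (∑ i ∈ s, ‖a i‖ₑ) * M :=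
  calc eLpNorm (fun x => ∑ i ∈ s, a i • g i x) p μ
      = eLpNorm (∑ i ∈ s, a i • g i) p μ := by
        congr 1
        ext x
        rw [Finset.sum_apply]
        rfl
    _ ≤ ∑ i ∈ s, eLpNorm (a i • g i) p μ :=
        eLpNorm_sum_le (fun i hi => (hg i hi).const_smul _) hp
    _ ≤ ∑ i ∈ s, ‖a i‖ₑ * M := Finset.sum_le_sum fun i hi => by
        rw [eLpNorm_const_smul]
        gcongr
        exact hM i hi
    _ = (∑ i ∈ s, ‖a i‖ₑ) * M := (Finset.sum_mul ..).symm

lemma sum_enorm_le_card_rpow_mul_eLpNorm_count [MeasurableSingletonClass α] (hp : 1 ≤ p)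
    {ξ : α → E} (hξ : AEStronglyMeasurable ξ Measure.count) (s : Finset α) :
    ∑ k ∈ s, ‖ξ k‖ₑ ≤ (s.card : ℝ≥0∞) ^ (1 - 1 / p.toReal) * eLpNorm ξ p Measure.count :=
  calc ∑ k ∈ s, ‖ξ k‖ₑ = eLpNorm ξ 1 (Measure.count.restrict s) := by
        simp [eLpNorm_one_eq_lintegral_enorm, lintegral_finset]
    _ ≤ eLpNorm ξ p (Measure.count.restrict s)
          * Measure.count.restrict (s : Set α) univ ^ (1 / (1 : ℝ≥0∞).toReal - 1 / p.toReal) :=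
        eLpNorm_le_eLpNorm_mul_rpow_measure_univ hp hξ.restrict
    _ ≤ (s.card : ℝ≥0∞) ^ (1 - 1 / p.toReal) * eLpNorm ξ p Measure.count := by
        rw [mul_comm, Measure.restrict_apply_univ, Measure.count_apply_finset, toReal_one,
          div_one]
        exact mul_le_mul' le_rfl (eLpNorm_mono_measure _ Measure.restrict_le_self)

lemma one_sub_one_div_toReal_nonneg (hp : 1 ≤ p) : 0 ≤ 1 - 1 / p.toReal := by
  rcases eq_or_ne p ⊤ with rfl | hp_top
  · simp
  · have : 1 ≤ p.toReal := by simpa using ENNReal.toReal_mono hp_top hp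
    simpa using inv_le_one_of_one_le₀ this

end FiniteSums

lemma DN_sub_DN (a b : ℕ → ℝ) (r N : ℕ) (t : ℝ) :
    DN a r N t - DN b r N t = ∑ k ∈ Finset.Icc r N, (a k - b k) • iteratedDeriv r (phi k) t := by
  simp only [DN, ← Finset.sum_sub_distrib, smul_eq_mul, sub_mul]

lemma eLpNorm_iteratedDeriv_phi_le_of_mem_Icc {r k N : ℕ} (hr : 1 ≤ r)
    (hk : k ∈ Finset.Icc r N) :
    eLpNorm (iteratedDeriv r (phi k)) 2 restr
      ≤ ENNReal.ofReal (√(3 * r * (16 : ℝ) ^ r) * (N : ℝ) ^ (2 * (r : ℝ) - 1 / 2)) := by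
  obtain ⟨hrk, hkN⟩ := Finset.mem_Icc.1 hk
  refine (eLpNorm_iteratedDeriv_phi_le hr (hr.trans hrk)).trans (ENNReal.ofReal_le_ofReal ?_)
  gcongr
  linarith [(Nat.one_le_cast (α := ℝ)).2 hr]

lemma card_Icc_rpow_le {r N : ℕ} (hr : 1 ≤ r) {e : ℝ} (he : 0 ≤ e) :
    ((Finset.Icc r N).card : ℝ≥0∞) ^ e ≤ ENNReal.ofReal ((N : ℝ) ^ e) := by
  rw [← ENNReal.ofReal_rpow_of_nonneg (Nat.cast_nonneg N) he, ENNReal.ofReal_natCast]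
  gcongr
  rw [Nat.card_Icc]
  omega

/-- `L²` perturbation bound:
`‖D_N^{(r)}f - D_N^{(r)}f^δ‖_2 ≤ c δ N^{2r-1/p+1/2}` under `‖ξ‖_{ℓ_p} ≤ δ`. -/
theorem stmt_8 (r : ℕ) (hr : 1 ≤ r) (p : ℝ≥0∞) (hp : 1 ≤ p) :
    ∃ c : ℝ, 0 < c ∧ ∀ (δ : ℝ), 0 < δ → δ < 1 → ∀ f fδ : ℝ → ℝ,
      eLpNorm (fun k : ℕ => coef f k - coef fδ k) p (Measure.count) ≤ ENNReal.ofReal δ →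
      ∀ N : ℕ, r ≤ N →
        eLpNorm (fun t => DN (coef f) r N t - DN (coef fδ) r N t) 2 restr ≤
          ENNReal.ofReal (c * δ * (N : ℝ) ^ (2 * r - 1 / p.toReal + 1 / 2)) := by
  set C := √(3 * r * (16 : ℝ) ^ r)
  refine ⟨C, by positivity, fun δ hδ _ f fδ hξ N hN => ?_⟩
  have hNpos : (0 : ℝ) < N := by exact_mod_cast hr.trans hN
  have hξsum := sum_enorm_le_card_rpow_mul_eLpNorm_count hp
    (measurable_of_countable (fun k : ℕ => coef f k - coef fδ k)).aestronglyMeasurable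
    (Finset.Icc r N)
  calc _ ≤ (∑ k ∈ Finset.Icc r N, ‖coef f k - coef fδ k‖ₑ)
          * ENNReal.ofReal (C * (N : ℝ) ^ (2 * (r : ℝ) - 1 / 2)) := by
        simp only [DN_sub_DN]
        exact eLpNorm_sum_smul_le one_le_two _ _
          (fun k _ => (continuous_iteratedDeriv_phi k r).aestronglyMeasurable)
          (fun k hk => eLpNorm_iteratedDeriv_phi_le_of_mem_Icc hr hk)
    _ ≤ ENNReal.ofReal ((N : ℝ) ^ (1 - 1 / p.toReal)) * ENNReal.ofReal δ
          * ENNReal.ofReal (C * (N : ℝ) ^ (2 * (r : ℝ) - 1 / 2)) := by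
        gcongr
        exact hξsum.trans (mul_le_mul' (card_Icc_rpow_le hr (one_sub_one_div_toReal_nonneg hp)) hξ)
    _ = ENNReal.ofReal (C * δ * (N : ℝ) ^ (2 * r - 1 / p.toReal + 1 / 2)) := by
        rw [← ENNReal.ofReal_mul (by positivity), ← ENNReal.ofReal_mul (by positivity),
          show 2 * (r : ℝ) - 1 / p.toReal + 1 / 2 = (1 - 1 / p.toReal) + (2 * r - 1 / 2) by ring,
          Real.rpow_add hNpos]
        ring_nf
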